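/- arXiv:math/0104279 — 6 statements merged into one kernel-verified Lean document; each statement's English description precedes it below -/
import Mathlib

section
/- Let n ≥ 1 and let (K_m)_{m≥1} be a strictly increasing sequence of positive real numbers tending to +∞. For each integer m ≥ 1 define E_m = {r = (r_1, …, r_n) ∈ ℝⁿ : r_j < −K_m for all j, and r_j > m·r_i for all pairs of indices j ≠ i}. Then there exists K > 0 such that the set {r ∈ ℝⁿ : r_j < −K for all j} is contained in the convex hull (over ℝ) of ⋃_{m≥1} E_m. -/
/-- The convex hull of `⋃_{m≥1} E_m`, where
`E_m = {r ∈ ℝⁿ : r_j < -K_m ∀ j, r_j > m r_i ∀ j ≠ i}` and `K_m ↑ +∞`, contains a set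
of the form `{r : r_j < -K ∀ j}`. -/
theorem convexHull_contains_corner_neighborhood
    (n : ℕ) (hn : 1 ≤ n)
    (K : ℕ → ℝ) (hKpos : ∀ m, 0 < K m) (hKmono : StrictMono K)
    (hKtop : Filter.Tendsto K Filter.atTop Filter.atTop) :
    ∃ K' > (0 : ℝ),
      {r : Fin n → ℝ | ∀ j, r j < -K'} ⊆
        convexHull ℝ (⋃ m : ℕ,
          {r : Fin n → ℝ | (∀ j, r j < -(K (m + 1))) ∧
            ∀ j i, j ≠ i → r j > ((m + 1 : ℕ) : ℝ) * r i}) := by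
  have hK2 := hKpos 2
  set K' : ℝ := 2 * K 2 + 2 with hK'def
  clear_value K'
  have hK'pos : 0 < K' := by nlinarith
  refine ⟨K', hK'pos, ?_⟩
  intro r hr
  simp only [Set.mem_setOf_eq] at hr
  have hne : (Finset.univ : Finset (Fin n)).Nonempty := ⟨⟨0, hn⟩, Finset.mem_univ _⟩
  set v : Fin n → ℝ := fun j => r j + K' / 2 with hv
  clear_value v
  have hvneg : ∀ j, v j < -(K' / 2) := by
    intro j
    have := hr j
    simp only [hv]
    linarith
  set B : ℝ := Finset.univ.inf' hne v with hB
  have hBle : ∀ j, B ≤ v j := fun j => Finset.inf'_le _ (Finset.mem_univ j)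
  clear_value B
  obtain ⟨m, hm⟩ := exists_nat_ge (2 * (-B) / K')
  have hKm := hKpos (m + 1)
  set l : ℝ := min (1 / 2) (K' / (4 * K (m + 1))) with hl
  have hlpos : 0 < l := lt_min (by norm_num) (by positivity)
  have hle : l ≤ 1 / 2 := min_le_left _ _
  have h1l : (0 : ℝ) < 1 - l := by linarith
  have hlK : l * K (m + 1) ≤ K' / 4 := by
    have h2 : l ≤ K' / (4 * K (m + 1)) := min_le_right _ _
    have : l * K (m + 1) ≤ (K' / (4 * K (m + 1))) * K (m + 1) := by nlinarith
    calc l * K (m + 1) ≤ (K' / (4 * K (m + 1))) * K (m + 1) := this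
      _ = K' / 4 := by field_simp
  clear_value l
  set c : ℝ := -K' / (2 * (1 - l)) with hc
  clear_value c
  have hcmul : c * (2 * (1 - l)) = -K' := by
    rw [hc]; field_simp
  have hcneg : c ≤ -(K' / 2) := by nlinarith
  set w : Fin n → ℝ := fun j => v j / l with hw
  clear_value w
  -- w lies in E_m
  have hwmem : w ∈ {r : Fin n → ℝ | (∀ j, r j < -(K (m + 1))) ∧
      ∀ j i, j ≠ i → r j > ((m + 1 : ℕ) : ℝ) * r i} := by
    constructor
    · intro j
      have hvj := hvneg j
      rw [hw]
      rw [div_lt_iff₀ hlpos]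
      have h3 : -K (m + 1) * l = -(l * K (m + 1)) := by ring
      linarith
    · intro j i _
      have hvi := hvneg i
      have hvj := hBle j
      have hmK : (m : ℝ) * K' ≥ 2 * (-B) := by
        rw [ge_iff_le, ← div_le_iff₀ hK'pos]
        exact hm
      push_cast
      rw [hw]
      have key : ((m : ℝ) + 1) * v i < v j := by
        nlinarith [mul_lt_mul_of_pos_left hvi (by positivity : (0:ℝ) < (m : ℝ) + 1)]
      show ((m : ℝ) + 1) * (v i / l) < v j / l
      rw [← mul_div_assoc, div_lt_div_iff₀ hlpos hlpos]
      nlinarith [mul_lt_mul_of_pos_right key hlpos]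
  -- the constant vector c lies in E_1
  have hcmem : (fun _ : Fin n => c) ∈ {r : Fin n → ℝ | (∀ j, r j < -(K (1 + 1))) ∧
      ∀ j i, j ≠ i → r j > ((1 + 1 : ℕ) : ℝ) * r i} := by
    constructor
    · intro j
      simp only
      have : -(K' / 2) = -(K 2 + 1) := by rw [hK'def]; ring
      have h2 : c ≤ -(K 2 + 1) := this ▸ hcneg
      norm_num
      linarith
    · intro j i _
      simp only
      push_cast
      nlinarith
  have hwU : w ∈ ⋃ m : ℕ, {r : Fin n → ℝ | (∀ j, r j < -(K (m + 1))) ∧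
      ∀ j i, j ≠ i → r j > ((m + 1 : ℕ) : ℝ) * r i} := Set.mem_iUnion.2 ⟨m, hwmem⟩
  have hcU : (fun _ : Fin n => c) ∈ ⋃ m : ℕ, {r : Fin n → ℝ | (∀ j, r j < -(K (m + 1))) ∧
      ∀ j i, j ≠ i → r j > ((m + 1 : ℕ) : ℝ) * r i} := Set.mem_iUnion.2 ⟨1, hcmem⟩
  have hmem := (convex_convexHull ℝ _) (subset_convexHull ℝ _ hwU)
    (subset_convexHull ℝ _ hcU) hlpos.le h1l.le (by ring : l + (1 - l) = 1)
  have heq : l • w + (1 - l) • (fun _ : Fin n => c) = r := by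
    funext j
    simp only [Pi.add_apply, Pi.smul_apply, smul_eq_mul, hw, hv, hc]
    field_simp
    ring
  rwa [heq] at hmem
end

section
/- Let n ≥ 1, let 𝒰 ⊆ ℂⁿ be an open set, and let (ℂ*)ⁿ = {z ∈ ℂⁿ : z_j ≠ 0 for all j}. If f is a holomorphic function on 𝒰 ∩ (ℂ*)ⁿ which is bounded (there is C > 0 with |f(z)| ≤ C for all z ∈ 𝒰 ∩ (ℂ*)ⁿ), then f extends holomorphically across the coordinate hyperplanes: there exists a holomorphic function F on 𝒰 with F(z) = f(z) for all z ∈ 𝒰 ∩ (ℂ*)ⁿ. -/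
open Metric Set Filter Function Complex
open scoped Topology Real

namespace BddHoloExt

variable {n : ℕ}

local notation "ℂⁿ" => EuclideanSpace ℂ (Fin n)

/-- coordinate norm bound -/
lemma apply_le_norm (y : ℂⁿ) (i : Fin n) : ‖y i‖ ≤ ‖y‖ := by
  rw [EuclideanSpace.norm_eq]
  have h1 : ‖y i‖ = Real.sqrt (‖y i‖ ^ 2) := (Real.sqrt_sq (norm_nonneg _)).symm
  rw [h1]
  apply Real.sqrt_le_sqrt
  exact Finset.single_le_sum (fun k _ => sq_nonneg ‖y k‖) (Finset.mem_univ i)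

lemma update_eq (x : ℂⁿ) (j : Fin n) (w : ℂ) :
    Function.update x j w = x + (w - x j) • (EuclideanSpace.single j (1 : ℂ)) := by
  funext i
  rcases eq_or_ne i j with rfl | h
  · simp [PiLp.add_apply, PiLp.smul_apply, EuclideanSpace.single_apply]
  · simp [Function.update_of_ne h, PiLp.add_apply, PiLp.smul_apply,
      EuclideanSpace.single_apply, h]

lemma norm_proj_le (j : Fin n) : ‖(EuclideanSpace.proj j : ℂⁿ →L[ℂ] ℂ)‖ ≤ 1 := by
  refine ContinuousLinearMap.opNorm_le_bound _ zero_le_one fun x => ?_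
  simpa using apply_le_norm x j

/-- Cauchy-type estimate for the derivative of a bounded holomorphic function. -/
lemma fderiv_bound {U : Set ℂⁿ} (hU : IsOpen U) {g : ℂⁿ → ℂ} {C : ℝ}
    (hg : DifferentiableOn ℂ g U) (hb : ∀ z ∈ U, ‖g z‖ ≤ C)
    {y : ℂⁿ} {δ : ℝ} (hδ : 0 < δ) (hy : ball y δ ⊆ U) :
    ‖fderiv ℂ g y‖ ≤ (2 * C + 1) / δ := by
  have hyU : y ∈ U := hy (mem_ball_self hδ)
  have hC0 : 0 ≤ C := le_trans (norm_nonneg _) (hb y hyU)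
  refine ContinuousLinearMap.opNorm_le_bound _ (by positivity) fun v => ?_
  rcases eq_or_ne v 0 with rfl | hv
  · simp
  have hv0 : 0 < ‖v‖ := norm_pos_iff.2 hv
  set δ' : ℝ := δ / ‖v‖ with hδ'def
  have hδ' : 0 < δ' := div_pos hδ hv0
  set φ : ℂ → ℂ := fun t => g (y + t • v) with hφdef
  have hline : ∀ t : ℂ, t ∈ ball (0 : ℂ) δ' → y + t • v ∈ U := by
    intro t ht
    apply hy
    rw [mem_ball] at ht ⊢
    simp only [dist_eq_norm] at ht ⊢
    rw [add_sub_cancel_left, norm_smul]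
    calc ‖t‖ * ‖v‖ < δ' * ‖v‖ := by
          apply mul_lt_mul_of_pos_right _ hv0
          simpa using ht
      _ = δ := by rw [hδ'def, div_mul_cancel₀ _ hv0.ne']
  have hlinediff : ∀ t : ℂ, DifferentiableAt ℂ (fun s : ℂ => y + s • v) t := by
    intro t
    exact (differentiableAt_id.smul_const v).const_add y
  have hφd : DifferentiableOn ℂ φ (ball 0 δ') := by
    intro t ht
    exact ((hg.differentiableAt (hU.mem_nhds (hline t ht))).comp t
      (hlinediff t)).differentiableWithinAt
  have hmaps : MapsTo φ (ball (0 : ℂ) δ') (ball (φ 0) (2 * C + 1)) := by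
    intro t ht
    rw [mem_ball, dist_eq_norm]
    calc ‖φ t - φ 0‖ ≤ ‖φ t‖ + ‖φ 0‖ := norm_sub_le _ _
      _ ≤ C + C := by
          refine add_le_add (hb _ (hline t ht)) (hb _ (hline 0 (mem_ball_self hδ')))
      _ < 2 * C + 1 := by linarith
  have hSch := Complex.norm_deriv_le_div_of_mapsTo_ball hφd (hmaps.mono_right ball_subset_closedBall) hδ'
  have hD : HasDerivAt φ (fderiv ℂ g y v) 0 := by
    have h1 : HasFDerivAt g (fderiv ℂ g y) y :=
      (hg.differentiableAt (hU.mem_nhds hyU)).hasFDerivAt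
    have h2 : HasDerivAt (fun t : ℂ => y + t • v) v 0 := by
      simpa using ((hasDerivAt_id (0 : ℂ)).smul_const v).const_add y
    have h3 : HasFDerivAt g (fderiv ℂ g y) ((fun t : ℂ => y + t • v) 0) := by
      simpa using h1
    exact h3.comp_hasDerivAt 0 h2
  calc ‖fderiv ℂ g y v‖ = ‖deriv φ 0‖ := by rw [hD.deriv]
    _ ≤ (2 * C + 1) / δ' := hSch
    _ = (2 * C + 1) / δ * ‖v‖ := by
        rw [hδ'def]
        field_simp


noncomputable def upd (x : ℂⁿ) (j : Fin n) (w : ℂ) : ℂⁿ :=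
  x + (w - x j) • EuclideanSpace.single j (1 : ℂ)

lemma upd_eq_update (x : ℂⁿ) (j : Fin n) (w : ℂ) : upd x j w = Function.update x j w :=
  (update_eq x j w).symm

lemma upd_self (x : ℂⁿ) (j : Fin n) : upd x j (x j) = x := by
  simp [upd]

lemma upd_apply (x : ℂⁿ) (j : Fin n) (w : ℂ) : upd x j w j = w := by
  rw [upd_eq_update]; simp

lemma upd_sub (x : ℂⁿ) (j : Fin n) (w : ℂ) :
    upd x j w - x = (w - x j) • EuclideanSpace.single j (1 : ℂ) := by
  simp [upd]

end BddHoloExt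

section Param

open BddHoloExt

variable {n : ℕ}

local notation "ℂⁿ" => EuclideanSpace ℂ (Fin n)

set_option maxHeartbeats 1000000 in
set_option synthInstance.maxHeartbeats 400000 in
/-- Differentiability (jointly in all variables) of the Cauchy-type parametric integral. -/
lemma param_diff {U : Set ℂⁿ} (hU : IsOpen U) {g : ℂⁿ → ℂ} (hg : DifferentiableOn ℂ g U)
    {C : ℝ} (hC : 0 ≤ C) (hb : ∀ z ∈ U, ‖g z‖ ≤ C) (j : Fin n) (p : ℂⁿ) (hpj : p j = 0)
    {r : ℝ} (hr : 0 < r)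
    (hmemU : ∀ x ∈ ball p (r / 2), ∀ w : ℂ, ‖w‖ = 2 * r → ball (upd x j w) r ⊆ U) :
    DifferentiableAt ℂ (fun x : ℂⁿ => (2 * π * Complex.I : ℂ)⁻¹ *
      ∫ θ in (0:ℝ)..(2 * π), (circleMap 0 (2 * r) θ * Complex.I) *
        ((circleMap 0 (2 * r) θ - x j)⁻¹ *
          g (upd x j (circleMap 0 (2 * r) θ)))) p := by
  classical
  set e : ℂⁿ := EuclideanSpace.single j (1 : ℂ) with hedef
  have he : ‖e‖ = 1 := by rw [hedef, EuclideanSpace.norm_single]; simp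
  set w : ℝ → ℂ := fun θ => circleMap 0 (2 * r) θ with hwdef
  have hwnorm : ∀ θ, ‖w θ‖ = 2 * r := by
    intro θ
    rw [hwdef]
    simp only [norm_circleMap_zero]
    rw [abs_of_pos (by positivity)]
  have hxj : ∀ x ∈ ball p (r / 2), ‖x j‖ < r / 2 := by
    intro x hx
    have h1 : x j = (x - p) j := by simp [PiLp.sub_apply, hpj]
    rw [h1]
    calc ‖(x - p) j‖ ≤ ‖x - p‖ := apply_le_norm _ _
      _ < r / 2 := by rwa [mem_ball, dist_eq_norm] at hx
  have hsub : ∀ x ∈ ball p (r / 2), ∀ θ, r ≤ ‖w θ - x j‖ := by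
    intro x hx θ
    have h1 := norm_sub_norm_le (w θ) (x j)
    have h2 := hxj x hx
    have h3 := hwnorm θ
    linarith
  have hne : ∀ x ∈ ball p (r / 2), ∀ θ, w θ - x j ≠ 0 := by
    intro x hx θ h
    have := hsub x hx θ
    rw [h] at this
    simp at this
    linarith
  have hyU : ∀ x ∈ ball p (r / 2), ∀ θ, upd x j (w θ) ∈ U := fun x hx θ =>
    hmemU x hx (w θ) (hwnorm θ) (mem_ball_self hr)
  have hfd : ∀ x ∈ ball p (r / 2), ∀ θ,
      ‖fderiv ℂ g (upd x j (w θ))‖ ≤ (2 * C + 1) / r := by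
    intro x hx θ
    exact fderiv_bound hU hg hb hr (hmemU x hx (w θ) (hwnorm θ))
  set L : ℂⁿ →L[ℂ] ℂⁿ :=
    ContinuousLinearMap.id ℂ ℂⁿ +
      (-(EuclideanSpace.proj j : ℂⁿ →L[ℂ] ℂ)).smulRight e with hLdef
  have hLnorm : ‖L‖ ≤ 2 := by
    rw [hLdef]
    refine (norm_add_le _ _).trans ?_
    have h1 : ‖ContinuousLinearMap.id ℂ ℂⁿ‖ ≤ 1 := ContinuousLinearMap.norm_id_le
    have h2 : ‖(-(EuclideanSpace.proj j : ℂⁿ →L[ℂ] ℂ)).smulRight e‖ ≤ 1 := by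
      rw [ContinuousLinearMap.norm_smulRight_apply, norm_neg, he, mul_one]
      exact norm_proj_le j
    linarith
  set F : ℂⁿ → ℝ → ℂ := fun x θ =>
    (w θ * Complex.I) * ((w θ - x j)⁻¹ * g (upd x j (w θ))) with hFdef
  set F' : ℂⁿ → ℝ → ℂⁿ →L[ℂ] ℂ := fun x θ =>
    (w θ * Complex.I) •
      (((w θ - x j)⁻¹) • ((fderiv ℂ g (upd x j (w θ))).comp L) +
        g (upd x j (w θ)) •
          ((-(-1 : ℂ) / (w θ - x j) ^ 2) • (EuclideanSpace.proj j : ℂⁿ →L[ℂ] ℂ))) with hF'def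
  have hpball : p ∈ ball p (r / 2) := mem_ball_self (by positivity)
  have hwcont : Continuous w := continuous_circleMap 0 (2 * r)
  have hupdcont : ∀ x : ℂⁿ, Continuous fun θ => upd x j (w θ) := by
    intro x
    simp only [upd]
    exact continuous_const.add ((hwcont.sub continuous_const).smul continuous_const)
  have hgcont : ∀ x ∈ ball p (r / 2), Continuous fun θ => g (upd x j (w θ)) := by
    intro x hx
    exact hg.continuousOn.comp_continuous (hupdcont x) fun θ => hyU x hx θ
  have hFcont : ∀ x ∈ ball p (r / 2), Continuous (F x) := by
    intro x hx
    rw [hFdef]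
    refine ((hwcont.mul continuous_const)).mul (Continuous.mul ?_ (hgcont x hx))
    exact ((hwcont.sub continuous_const).inv₀ fun θ => hne x hx θ)
  have hdiffF : ∀ θ : ℝ, ∀ x ∈ ball p (r / 2), HasFDerivAt (fun y => F y θ) (F' x θ) x := by
    intro θ x hx
    have hprojx : HasFDerivAt (fun y : ℂⁿ => y j) (EuclideanSpace.proj j : ℂⁿ →L[ℂ] ℂ) x := by
      have h := (EuclideanSpace.proj j : ℂⁿ →L[ℂ] ℂ).hasFDerivAt (x := x)
      have hco : ⇑(EuclideanSpace.proj j : ℂⁿ →L[ℂ] ℂ) = fun y : ℂⁿ => y j := by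
        funext y; rfl
      rwa [hco] at h
    have hA : HasFDerivAt (fun y : ℂⁿ => upd y j (w θ)) L x := by
      simp only [upd, hLdef, ← hedef]
      exact (hasFDerivAt_id x).add ((hprojx.const_sub (w θ)).smul_const e)
    have hgat : HasFDerivAt g (fderiv ℂ g (upd x j (w θ))) (upd x j (w θ)) :=
      (hg.differentiableAt (hU.mem_nhds (hyU x hx θ))).hasFDerivAt
    have hcomp : HasFDerivAt (fun y : ℂⁿ => g (upd y j (w θ)))
        ((fderiv ℂ g (upd x j (w θ))).comp L) x := hgat.comp x hA
    have hinv : HasDerivAt (fun ζ : ℂ => (w θ - ζ)⁻¹)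
        (-(-1 : ℂ) / (w θ - x j) ^ 2) (x j) := by
      have h0 : HasDerivAt (fun ζ : ℂ => w θ - ζ) (-1 : ℂ) (x j) := by
        simpa using (hasDerivAt_id (x j)).const_sub (w θ)
      exact h0.inv (hne x hx θ)
    have hinvF : HasFDerivAt (fun y : ℂⁿ => (w θ - y j)⁻¹)
        ((-(-1 : ℂ) / (w θ - x j) ^ 2) • (EuclideanSpace.proj j : ℂⁿ →L[ℂ] ℂ)) x :=
      hinv.comp_hasFDerivAt (h₂ := fun ζ : ℂ => (w θ - ζ)⁻¹) (f := fun y : ℂⁿ => y j) x hprojx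
    exact (hinvF.mul hcomp).const_mul (w θ * Complex.I)
  have hF'bd : ∀ θ : ℝ, ∀ x ∈ ball p (r / 2), ‖F' x θ‖ ≤ (10 * C + 4) / r := by
    intro θ x hx
    have hge := hsub x hx θ
    have hinv1 : ‖(w θ - x j)⁻¹‖ ≤ r⁻¹ := by
      rw [norm_inv]
      exact inv_anti₀ hr hge
    have hinv2 : ‖(-(-1 : ℂ) / (w θ - x j) ^ 2)‖ ≤ (r ^ 2)⁻¹ := by
      rw [norm_div, norm_pow]
      simp only [norm_neg, norm_one]
      rw [one_div]
      exact inv_anti₀ (by positivity) (by nlinarith [norm_nonneg (w θ - x j)])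
    have hcompbd : ‖(fderiv ℂ g (upd x j (w θ))).comp L‖ ≤ (2 * C + 1) / r * 2 :=
      (ContinuousLinearMap.opNorm_comp_le _ _).trans
        (mul_le_mul (hfd x hx θ) hLnorm (norm_nonneg _) (by positivity))
    have hgbd : ‖g (upd x j (w θ))‖ ≤ C := hb _ (hyU x hx θ)
    have hT1 : ‖((w θ - x j)⁻¹) • ((fderiv ℂ g (upd x j (w θ))).comp L)‖ ≤
        r⁻¹ * ((2 * C + 1) / r * 2) :=
      (ContinuousLinearMap.opNorm_smul_le _ _).trans
        (mul_le_mul hinv1 hcompbd (norm_nonneg _) (by positivity))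
    have hT2 : ‖g (upd x j (w θ)) •
        ((-(-1 : ℂ) / (w θ - x j) ^ 2) • (EuclideanSpace.proj j : ℂⁿ →L[ℂ] ℂ))‖ ≤
        C * ((r ^ 2)⁻¹ * 1) :=
      (ContinuousLinearMap.opNorm_smul_le _ _).trans
        (mul_le_mul hgbd
          ((ContinuousLinearMap.opNorm_smul_le _ _).trans
            (mul_le_mul hinv2 (norm_proj_le j) (norm_nonneg _) (by positivity)))
          (norm_nonneg _) hC)
    have hwI : ‖w θ * Complex.I‖ = 2 * r := by
      rw [norm_mul, Complex.norm_I, mul_one, hwnorm]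
    have hsum : ‖((w θ - x j)⁻¹) • ((fderiv ℂ g (upd x j (w θ))).comp L) +
        g (upd x j (w θ)) •
          ((-(-1 : ℂ) / (w θ - x j) ^ 2) • (EuclideanSpace.proj j : ℂⁿ →L[ℂ] ℂ))‖ ≤
        r⁻¹ * ((2 * C + 1) / r * 2) + C * ((r ^ 2)⁻¹ * 1) :=
      (norm_add_le _ _).trans (add_le_add hT1 hT2)
    calc ‖F' x θ‖ ≤ ‖w θ * Complex.I‖ *
          ‖((w θ - x j)⁻¹) • ((fderiv ℂ g (upd x j (w θ))).comp L) +
            g (upd x j (w θ)) •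
              ((-(-1 : ℂ) / (w θ - x j) ^ 2) • (EuclideanSpace.proj j : ℂⁿ →L[ℂ] ℂ))‖ := by
          simp only [hF'def]
          exact ContinuousLinearMap.opNorm_smul_le _ _
      _ ≤ (2 * r) * (r⁻¹ * ((2 * C + 1) / r * 2) + C * ((r ^ 2)⁻¹ * 1)) := by
          rw [hwI]
          exact mul_le_mul_of_nonneg_left hsum (by positivity)
      _ = (10 * C + 4) / r := by field_simp; ring
  borelize ℂⁿ
  borelize (ℂⁿ →L[ℂ] ℂ)
  haveI : ProperSpace (ℂⁿ →L[ℂ] ℂ) := FiniteDimensional.proper ℂ _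
  haveI : SecondCountableTopology (ℂⁿ →L[ℂ] ℂ) := inferInstance
  haveI : MeasurableSMul₂ ℂ (ℂⁿ →L[ℂ] ℂ) := inferInstance
  have hF'meas : MeasureTheory.AEStronglyMeasurable (F' p)
      (MeasureTheory.volume.restrict (Set.uIoc (0:ℝ) (2*π))) := by
    have m1 : Measurable fun θ => fderiv ℂ g (upd p j (w θ)) :=
      (measurable_fderiv ℂ g).comp (hupdcont p).measurable
    have m2 : Measurable fun θ => (fderiv ℂ g (upd p j (w θ))).comp L := by
      have hcont : Continuous fun T : ℂⁿ →L[ℂ] ℂ => T.comp L :=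
        ((ContinuousLinearMap.compL ℂ ℂⁿ ℂⁿ ℂ).flip L).continuous
      exact hcont.measurable.comp m1
    have m3 : Measurable (F' p) := by
      rw [hF'def]
      refine Measurable.smul ((hwcont.mul continuous_const).measurable) ?_
      refine Measurable.add ?_ ?_
      · exact Measurable.smul ((hwcont.sub continuous_const).inv₀
          (fun θ => hne p hpball θ)).measurable m2
      · refine Measurable.smul (hgcont p hpball).measurable ?_
        refine Measurable.smul_const ?_ _
        exact (Continuous.div continuous_const ((hwcont.sub continuous_const).pow 2)
          (fun θ => pow_ne_zero 2 (hne p hpball θ))).measurable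
    exact m3.aestronglyMeasurable
  have hmain := intervalIntegral.hasFDerivAt_integral_of_dominated_of_fderiv_le
    (μ := MeasureTheory.volume) (F := F) (F' := F') (x₀ := p)
    (bound := fun _ => (10 * C + 4) / r) (a := (0:ℝ)) (b := 2*π) (s := ball p (r/2))
    (ball_mem_nhds p (by positivity))
    (Filter.eventually_of_mem (ball_mem_nhds p (by positivity : (0:ℝ) < r/2))
      (fun x hx => (hFcont x hx).aestronglyMeasurable))
    ((hFcont p hpball).intervalIntegrable 0 (2*π))
    hF'meas
    (Filter.Eventually.of_forall fun θ => fun _ => fun x hx => hF'bd θ x hx)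
    intervalIntegrable_const
    (Filter.Eventually.of_forall fun θ => fun _ => fun x hx => hdiffF θ x hx)
  have hres := hmain.differentiableAt.const_mul ((2 * π * Complex.I : ℂ)⁻¹)
  simp only [hFdef, hwdef] at hres
  exact hres

end Param


section Extend

open BddHoloExt

variable {n : ℕ}

local notation "ℂⁿ" => EuclideanSpace ℂ (Fin n)

set_option maxHeartbeats 1000000 in
set_option synthInstance.maxHeartbeats 400000 in
/-- Extension of a bounded holomorphic function across one coordinate hyperplane. -/
lemma extend_one (V : Set ℂⁿ) (hV : IsOpen V) (j : Fin n) (g : ℂⁿ → ℂ) (C : ℝ) (hC : 0 ≤ C)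
    (hg : DifferentiableOn ℂ g (V ∩ {z : ℂⁿ | z j ≠ 0}))
    (hb : ∀ z ∈ V ∩ {z : ℂⁿ | z j ≠ 0}, ‖g z‖ ≤ C) :
    ∃ G : ℂⁿ → ℂ, DifferentiableOn ℂ G V ∧ (∀ z ∈ V ∩ {z : ℂⁿ | z j ≠ 0}, G z = g z) ∧
      ∀ z ∈ V, ‖G z‖ ≤ C := by
  classical
  set W : Set ℂⁿ := V ∩ {z : ℂⁿ | z j ≠ 0} with hWdef
  have hWopen : IsOpen W := by
    refine hV.inter ?_
    have hc : Continuous fun z : ℂⁿ => z j := by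
      have h := (EuclideanSpace.proj j : ℂⁿ →L[ℂ] ℂ).continuous
      have hco : ⇑(EuclideanSpace.proj j : ℂⁿ →L[ℂ] ℂ) = fun y : ℂⁿ => y j := by
        funext y; rfl
      rwa [hco] at h
    exact isOpen_compl_singleton.preimage hc
  set G : ℂⁿ → ℂ := fun z =>
    if z j = 0 then limUnder (𝓝[≠] (0:ℂ)) (fun w => g (upd z j w)) else g z with hGdef
  have hGeq : ∀ z ∈ W, G z = g z := by
    intro z hz
    rw [hGdef]
    simp only
    rw [if_neg hz.2]
  have key : ∀ p ∈ V, p j = 0 → DifferentiableAt ℂ G p ∧ ‖G p‖ ≤ C := by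
    intro p hp hpj
    obtain ⟨R5, hR5, hball⟩ := Metric.isOpen_iff.1 hV p hp
    set r : ℝ := R5 / 5 with hrdef
    have hr : 0 < r := by positivity
    have hppos : dist p p < r / 2 := by rw [dist_self]; positivity
    have hxj : ∀ x : ℂⁿ, dist x p < r / 2 → ‖x j‖ < r / 2 := by
      intro x hx
      have h1 : x j = (x - p) j := by simp [PiLp.sub_apply, hpj]
      rw [h1]
      calc ‖(x - p) j‖ ≤ ‖x - p‖ := apply_le_norm _ _
        _ < r / 2 := by rwa [dist_eq_norm] at hx
    have hupd_dist : ∀ x : ℂⁿ, dist x p < r / 2 → ∀ w : ℂ, ‖w‖ < 3 * r →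
        ‖upd x j w - p‖ < 4 * r := by
      intro x hx w hw
      have h1 : upd x j w - p = (x - p) + (w - x j) • EuclideanSpace.single j (1 : ℂ) := by
        simp only [upd]
        abel
      rw [h1]
      have h2 : ‖(w - x j) • EuclideanSpace.single j (1 : ℂ)‖ = ‖w - x j‖ := by
        rw [norm_smul, EuclideanSpace.norm_single]
        simp
      have h3 := norm_sub_le w (x j)
      have h4 := hxj x hx
      have h5 : ‖x - p‖ < r / 2 := by rwa [dist_eq_norm] at hx
      calc ‖(x - p) + (w - x j) • EuclideanSpace.single j (1 : ℂ)‖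
          ≤ ‖x - p‖ + ‖(w - x j) • EuclideanSpace.single j (1 : ℂ)‖ := norm_add_le _ _
        _ = ‖x - p‖ + ‖w - x j‖ := by rw [h2]
        _ < 4 * r := by linarith
    have hmemW2 : ∀ x : ℂⁿ, dist x p < r / 2 → ∀ w : ℂ, w ≠ 0 → ‖w‖ < 3 * r →
        upd x j w ∈ W := by
      intro x hx w hw0 hw
      refine ⟨hball ?_, ?_⟩
      · rw [mem_ball, dist_eq_norm]
        calc ‖upd x j w - p‖ < 4 * r := hupd_dist x hx w hw
          _ < R5 := by rw [hrdef]; linarith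
      · show upd x j w j ≠ 0
        rw [upd_apply]
        exact hw0
    have hmemW : ∀ x : ℂⁿ, dist x p < r / 2 → ∀ w : ℂ, ‖w‖ = 2 * r →
        ball (upd x j w) r ⊆ W := by
      intro x hx w hw y hy
      rw [mem_ball, dist_eq_norm] at hy
      have hyp : ‖y - p‖ < 5 * r := by
        have h1 : ‖upd x j w - p‖ < 4 * r := hupd_dist x hx w (by rw [hw]; linarith)
        calc ‖y - p‖ ≤ ‖y - upd x j w‖ + ‖upd x j w - p‖ := norm_sub_le_norm_sub_add_norm_sub _ _ _
          _ < r + 4 * r := by linarith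
          _ = 5 * r := by ring
      refine ⟨hball ?_, ?_⟩
      · rw [mem_ball, dist_eq_norm]
        calc ‖y - p‖ < 5 * r := hyp
          _ = R5 := by rw [hrdef]; ring
      · show y j ≠ 0
        have h1 : ‖y j - upd x j w j‖ ≤ ‖y - upd x j w‖ := by
          have : y j - upd x j w j = (y - upd x j w) j := by simp [PiLp.sub_apply]
          rw [this]
          exact apply_le_norm _ _
        have h2 : ‖upd x j w j‖ = 2 * r := by rw [upd_apply, hw]
        have h3 := norm_sub_norm_le (y j) (upd x j w j)
        have : 0 < ‖y j‖ := by
          have h4 : ‖y j‖ ≥ ‖upd x j w j‖ - ‖y j - upd x j w j‖ := by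
            have := norm_sub_norm_le (upd x j w j) (y j)
            have h5 : upd x j w j - y j = -(y j - upd x j w j) := by ring
            rw [h5, norm_neg] at this
            linarith
          rw [h2] at h4
          linarith
        exact norm_pos_iff.1 this
    have hslice : ∀ x : ℂⁿ, dist x p < r / 2 → DifferentiableOn ℂ
        (Function.update (fun w => g (upd x j w)) 0
          (limUnder (𝓝[≠] (0:ℂ)) (fun w => g (upd x j w)))) (ball (0:ℂ) (3 * r)) := by
      intro x hx
      refine Complex.differentiableOn_update_limUnder_of_bddAbove
        (isOpen_ball.mem_nhds (mem_ball_self (by positivity))) ?_ ?_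
      · intro w hw
        have hw0 : w ≠ 0 := by simpa using hw.2
        have hwW : upd x j w ∈ W := hmemW2 x hx w hw0 (mem_ball_zero_iff.1 hw.1)
        have h1 : DifferentiableAt ℂ g (upd x j w) := hg.differentiableAt (hWopen.mem_nhds hwW)
        have h2 : DifferentiableAt ℂ (fun w : ℂ => upd x j w) w := by
          simp only [upd]
          exact ((differentiableAt_id.sub_const _).smul_const _).const_add x
        exact (h1.comp w h2).differentiableWithinAt
      · refine ⟨C, ?_⟩
        rintro - ⟨w, hw, rfl⟩
        exact hb _ (hmemW2 x hx w (by simpa using hw.2) (mem_ball_zero_iff.1 hw.1))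
    have hGx : ∀ x : ℂⁿ, dist x p < r / 2 → G x = (2 * π * Complex.I : ℂ)⁻¹ *
        ∫ θ in (0:ℝ)..(2 * π), (circleMap 0 (2 * r) θ * Complex.I) *
          ((circleMap 0 (2 * r) θ - x j)⁻¹ * g (upd x j (circleMap 0 (2 * r) θ))) := by
      intro x hx
      set hxf : ℂ → ℂ := fun w => g (upd x j w) with hxfdef
      set Hx : ℂ → ℂ := Function.update hxf 0 (limUnder (𝓝[≠] (0:ℂ)) hxf) with hHxdef
      have hHd : DifferentiableOn ℂ Hx (ball 0 (3 * r)) := hslice x hx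
      have hxjm : x j ∈ ball (0:ℂ) (2 * r) := by
        rw [mem_ball_zero_iff]
        have := hxj x hx
        linarith
      have hcOn : ContinuousOn Hx (closedBall 0 (2 * r)) :=
        (hHd.continuousOn).mono (closedBall_subset_ball (by linarith))
      have hdAt : ∀ z ∈ ball (0:ℂ) (2 * r) \ (∅ : Set ℂ), DifferentiableAt ℂ Hx z := fun z hz =>
        hHd.differentiableAt (isOpen_ball.mem_nhds (ball_subset_ball (by linarith) hz.1))
      have hCau := Complex.two_pi_I_inv_smul_circleIntegral_sub_inv_smul_of_differentiable_on_off_countable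
        countable_empty hxjm hcOn hdAt
      have hcirc : (∮ z in C(0, 2 * r), (z - x j)⁻¹ • Hx z) =
          ∮ z in C(0, 2 * r), (z - x j)⁻¹ • g (upd x j z) := by
        refine circleIntegral.integral_congr (by positivity) ?_
        intro z hz
        have hz0 : z ≠ 0 := by
          intro h
          rw [mem_sphere_zero_iff_norm] at hz
          rw [h] at hz
          simp at hz
          linarith
        simp only [hHxdef]
        rw [Function.update_of_ne hz0]
      have hHxval : Hx (x j) = G x := by
        rcases eq_or_ne (x j) 0 with h0 | h0
        · rw [h0, hHxdef, Function.update_self, hGdef]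
          simp only
          rw [if_pos h0, hxfdef]
        · rw [hHxdef, Function.update_of_ne h0, hxfdef]
          simp only
          rw [upd_self, hGdef]
          simp only
          rw [if_neg h0]
      have hunfold : (∮ z in C(0, 2 * r), (z - x j)⁻¹ • g (upd x j z)) =
          ∫ θ in (0:ℝ)..(2 * π), (circleMap 0 (2 * r) θ * Complex.I) *
            ((circleMap 0 (2 * r) θ - x j)⁻¹ * g (upd x j (circleMap 0 (2 * r) θ))) := by
        rw [circleIntegral]
        congr 1
        funext θ
        rw [deriv_circleMap]
        simp [smul_eq_mul]
      have hmain : G x = (2 * π * Complex.I : ℂ)⁻¹ •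
          (∮ z in C(0, 2 * r), (z - x j)⁻¹ • g (upd x j z)) := by
        rw [← hcirc, hCau, hHxval]
      rw [hmain, hunfold, smul_eq_mul]
    have hdiffΦ := param_diff hWopen hg hC hb j p hpj hr
      (fun x hx w hw => hmemW x (mem_ball.1 hx) w hw)
    constructor
    · refine hdiffΦ.congr_of_eventuallyEq ?_
      refine Filter.eventuallyEq_of_mem (ball_mem_nhds p (by positivity : (0:ℝ) < r / 2)) ?_
      intro x hx
      exact hGx x (mem_ball.1 hx)
    · set hpf : ℂ → ℂ := fun w => g (upd p j w) with hpfdef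
      set Hp : ℂ → ℂ := Function.update hpf 0 (limUnder (𝓝[≠] (0:ℂ)) hpf) with hHpdef
      have hHd : DifferentiableOn ℂ Hp (ball 0 (3 * r)) := hslice p hppos
      have hcontHp : ContinuousAt Hp 0 :=
        (hHd.differentiableAt (isOpen_ball.mem_nhds (mem_ball_self (by positivity)))).continuousAt
      have hHp0 : Hp 0 = G p := by
        rw [hHpdef, Function.update_self, hGdef]
        simp only
        rw [if_pos hpj, hpfdef]
      have htend : Filter.Tendsto hpf (𝓝[≠] (0:ℂ)) (𝓝 (G p)) := by
        have h1 : Filter.Tendsto Hp (𝓝[≠] (0:ℂ)) (𝓝 (Hp 0)) :=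
          hcontHp.tendsto.mono_left nhdsWithin_le_nhds
        rw [hHp0] at h1
        refine h1.congr' ?_
        filter_upwards [self_mem_nhdsWithin] with w hw
        rw [hHpdef]
        rw [Function.update_of_ne hw]
      have hnorm : Filter.Tendsto (fun w => ‖hpf w‖) (𝓝[≠] (0:ℂ)) (𝓝 ‖G p‖) := htend.norm
      refine le_of_tendsto hnorm ?_
      have hballm : ball (0:ℂ) (3 * r) ∈ 𝓝[≠] (0:ℂ) :=
        nhdsWithin_le_nhds (isOpen_ball.mem_nhds (mem_ball_self (by positivity)))
      filter_upwards [hballm, self_mem_nhdsWithin] with w hw1 hw2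
      exact hb _ (hmemW2 p hppos w hw2 (mem_ball_zero_iff.1 hw1))
  refine ⟨G, ?_, hGeq, ?_⟩
  · intro z hz
    rcases eq_or_ne (z j) 0 with h0 | h0
    · exact ((key z hz h0).1).differentiableWithinAt
    · have hzW : z ∈ W := ⟨hz, h0⟩
      have hgz : DifferentiableAt ℂ g z := hg.differentiableAt (hWopen.mem_nhds hzW)
      have : DifferentiableAt ℂ G z := by
        refine hgz.congr_of_eventuallyEq ?_
        exact Filter.eventuallyEq_of_mem (hWopen.mem_nhds hzW) (fun y hy => hGeq y hy)
      exact this.differentiableWithinAt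
  · intro z hz
    rcases eq_or_ne (z j) 0 with h0 | h0
    · exact (key z hz h0).2
    · rw [hGeq z ⟨hz, h0⟩]
      exact hb z ⟨hz, h0⟩

end Extend

/-- A bounded holomorphic function on `𝒰 ∩ (ℂ*)ⁿ`, where `𝒰 ⊆ ℂⁿ`
is open, extends holomorphically across the coordinate hyperplanes to all of `𝒰`. -/
theorem bounded_holomorphic_extends_across_coordinate_hyperplanes
    (n : ℕ) (hn : 1 ≤ n)
    (𝒰 : Set (EuclideanSpace ℂ (Fin n))) (h𝒰 : IsOpen 𝒰)
    (f : EuclideanSpace ℂ (Fin n) → ℂ)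
    (hf : DifferentiableOn ℂ f (𝒰 ∩ {z : EuclideanSpace ℂ (Fin n) | ∀ j, z j ≠ 0}))
    (hbd : ∃ C > (0 : ℝ), ∀ z ∈ 𝒰 ∩ {z : EuclideanSpace ℂ (Fin n) | ∀ j, z j ≠ 0},
      ‖f z‖ ≤ C) :
    ∃ F : EuclideanSpace ℂ (Fin n) → ℂ,
      DifferentiableOn ℂ F 𝒰 ∧
      ∀ z ∈ 𝒰 ∩ {z : EuclideanSpace ℂ (Fin n) | ∀ j, z j ≠ 0}, F z = f z := by
  classical
  obtain ⟨C, hC0, hbC⟩ := hbd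
  have hb' : ∀ z ∈ 𝒰 ∩ {z : EuclideanSpace ℂ (Fin n) | ∀ j, z j ≠ 0}, ‖f z‖ ≤ C := by
    intro z hz
    exact hbC z hz
  set Ω : ℕ → Set (EuclideanSpace ℂ (Fin n)) :=
    fun k => 𝒰 ∩ {z | ∀ j : Fin n, k ≤ (j : ℕ) → z j ≠ 0} with hΩdef
  have hcj : ∀ j : Fin n, Continuous fun z : EuclideanSpace ℂ (Fin n) => z j := by
    intro j
    have h := (EuclideanSpace.proj j : EuclideanSpace ℂ (Fin n) →L[ℂ] ℂ).continuous
    have hco : ⇑(EuclideanSpace.proj j : EuclideanSpace ℂ (Fin n) →L[ℂ] ℂ) =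
        fun y : EuclideanSpace ℂ (Fin n) => y j := by funext y; rfl
    rwa [hco] at h
  have hΩopen : ∀ k, IsOpen (Ω k) := by
    intro k
    refine h𝒰.inter ?_
    have hs : {z : EuclideanSpace ℂ (Fin n) | ∀ j : Fin n, k ≤ (j:ℕ) → z j ≠ 0} =
        ⋂ j : Fin n, {z | k ≤ (j:ℕ) → z j ≠ 0} := by
      ext z; simp [Set.mem_iInter]
    rw [hs]
    refine isOpen_iInter_of_finite fun j => ?_
    rcases le_or_gt k (j:ℕ) with h | h
    · have hss : {z : EuclideanSpace ℂ (Fin n) | k ≤ (j:ℕ) → z j ≠ 0} = {z | z j ≠ 0} := by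
        ext z; simp [h]
      rw [hss]
      exact isOpen_compl_singleton.preimage (hcj j)
    · have hss : {z : EuclideanSpace ℂ (Fin n) | k ≤ (j:ℕ) → z j ≠ 0} = Set.univ := by
        ext z; simp [Nat.not_le.2 h]
      rw [hss]
      exact isOpen_univ
  have hΩ0 : Ω 0 = 𝒰 ∩ {z | ∀ j, z j ≠ 0} := by
    rw [hΩdef]; simp
  have hmono : ∀ k, Ω 0 ⊆ Ω k := fun k z hz => ⟨hz.1, fun j _ => hz.2 j (Nat.zero_le _)⟩
  have key : ∀ k, k ≤ n → ∃ F, DifferentiableOn ℂ F (Ω k) ∧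
      (∀ z ∈ Ω 0, F z = f z) ∧ ∀ z ∈ Ω k, ‖F z‖ ≤ C := by
    intro k
    induction k with
    | zero =>
      intro _
      exact ⟨f, by rw [hΩ0]; exact hf, fun z _ => rfl, by rw [hΩ0]; exact hb'⟩
    | succ k ih =>
      intro hk1
      obtain ⟨Fk, hFkdiff, hFkeq, hFkbd⟩ := ih (Nat.le_of_succ_le hk1)
      set j₀ : Fin n := ⟨k, hk1⟩ with hj₀def
      have hset : Ω (k+1) ∩ {z : EuclideanSpace ℂ (Fin n) | z j₀ ≠ 0} = Ω k := by
        rw [hΩdef]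
        ext z
        simp only [Set.mem_inter_iff, Set.mem_setOf_eq]
        constructor
        · rintro ⟨⟨hU, h1⟩, h2⟩
          refine ⟨hU, fun j hj => ?_⟩
          rcases eq_or_lt_of_le hj with heq | hlt
          · have hjj : j = j₀ := Fin.ext heq.symm
            rw [hjj]; exact h2
          · exact h1 j hlt
        · rintro ⟨hU, h1⟩
          exact ⟨⟨hU, fun j hj => h1 j (le_trans (Nat.le_succ k) hj)⟩, h1 j₀ le_rfl⟩
      obtain ⟨G, hGdiff, hGeq, hGbd⟩ := extend_one (Ω (k+1)) (hΩopen (k+1)) j₀ Fk C hC0.le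
        (by rw [hset]; exact hFkdiff) (by rw [hset]; exact hFkbd)
      refine ⟨G, hGdiff, ?_, hGbd⟩
      intro z hz
      have hz' : z ∈ Ω (k+1) ∩ {z : EuclideanSpace ℂ (Fin n) | z j₀ ≠ 0} := by
        rw [hset]; exact hmono k hz
      rw [hGeq z hz']
      exact hFkeq z hz
  obtain ⟨F, hFdiff, hFeq, _⟩ := key n le_rfl
  have hΩn : Ω n = 𝒰 := by
    rw [hΩdef]
    ext z
    simp only [Set.mem_inter_iff, Set.mem_setOf_eq]
    exact ⟨fun h => h.1, fun h => ⟨h, fun j hj => absurd hj (not_le.2 j.isLt)⟩⟩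
  rw [hΩn] at hFdiff
  exact ⟨F, hFdiff, fun z hz => hFeq z (by rw [hΩ0]; exact hz)⟩
end

section
/- Let γ = (γ_1, …, γ_n) ∈ ℂⁿ and let H_ss = Σ_{j=1}^n γ_j x_j y_j in the polynomial ring ℂ[x_1, …, x_n, y_1, …, y_n]. Let H_nil be a homogeneous polynomial of degree 2 such that {H_ss, H_nil} = 0 and such that the derivation P ↦ {H_nil, P} is locally nilpotent (for every polynomial P there is an r ≥ 1 such that the r-fold iterated bracket {H_nil, {H_nil, …, {H_nil, P}…}} vanishes). Let H be a polynomial whose homogeneous components of degree 0 and degree 1 vanish and whose homogeneous component of degree 2 equals H_ss + H_nil, and suppose {H_ss, H} = 0. Then for every polynomial F with {H, F} = 0 one also has {H_ss, F} = 0. -/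
open MvPolynomial

/-- The standard Poisson bracket `{H, F} = Σ_j (∂H/∂x_j ∂F/∂y_j − ∂H/∂y_j ∂F/∂x_j)`
on `ℂ[x_1, …, x_n, y_1, …, y_n]`, where `x_j = X (Sum.inl j)` and `y_j = X (Sum.inr j)`. -/
noncomputable def poissonBracket {n : ℕ} (H F : MvPolynomial (Fin n ⊕ Fin n) ℂ) :
    MvPolynomial (Fin n ⊕ Fin n) ℂ :=
  ∑ j : Fin n,
    (pderiv (Sum.inl j) H * pderiv (Sum.inr j) F
      - pderiv (Sum.inr j) H * pderiv (Sum.inl j) F)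

namespace PBAux

variable {n : ℕ}

/-- weight of a monomial exponent -/
noncomputable def wt (γ : Fin n → ℂ) (m : (Fin n ⊕ Fin n) →₀ ℕ) : ℂ :=
  ∑ j : Fin n, γ j * ((m (Sum.inr j) : ℂ) - (m (Sum.inl j) : ℂ))

lemma wt_add (γ : Fin n → ℂ) (a b : (Fin n ⊕ Fin n) →₀ ℕ) :
    wt γ (a + b) = wt γ a + wt γ b := by
  unfold wt
  rw [← Finset.sum_add_distrib]
  refine Finset.sum_congr rfl fun j _ => ?_
  simp only [Finsupp.add_apply]
  push_cast
  ring

lemma wt_single_inl (γ : Fin n → ℂ) (j : Fin n) :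
    wt γ (Finsupp.single (Sum.inl j) 1) = -γ j := by
  unfold wt
  rw [Finset.sum_eq_single j]
  · simp [Finsupp.single_apply]
  · intro k _ hk
    simp only [Finsupp.single_apply]
    have : ¬ ((Sum.inl j : Fin n ⊕ Fin n) = Sum.inl k) := by simp [Sum.inl.injEq]; intro h; exact hk h.symm
    have h2 : ¬ ((Sum.inl j : Fin n ⊕ Fin n) = Sum.inr k) := by simp
    simp [this, h2]
  · simp

lemma wt_single_inr (γ : Fin n → ℂ) (j : Fin n) :
    wt γ (Finsupp.single (Sum.inr j) 1) = γ j := by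
  unfold wt
  rw [Finset.sum_eq_single j]
  · simp [Finsupp.single_apply]
  · intro k _ hk
    simp only [Finsupp.single_apply]
    have : ¬ ((Sum.inr j : Fin n ⊕ Fin n) = Sum.inr k) := by simp [Sum.inr.injEq]; intro h; exact hk h.symm
    have h2 : ¬ ((Sum.inr j : Fin n ⊕ Fin n) = Sum.inl k) := by simp
    simp [this, h2]
  · simp

lemma degree_add (a b : (Fin n ⊕ Fin n) →₀ ℕ) :
    (a + b).degree = a.degree + b.degree := by
  simp [Finsupp.degree_eq_weight_one, map_add]

lemma degree_single (i : Fin n ⊕ Fin n) : (Finsupp.single i 1).degree = 1 := by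
  classical
  exact Finsupp.degree_single i 1


open Finsupp

variable {σ : Type*} [DecidableEq σ]

lemma coeff_pderiv (i : σ) (P : MvPolynomial σ ℂ) (k : σ →₀ ℕ) :
    MvPolynomial.coeff k (MvPolynomial.pderiv i P)
      = ((k i : ℂ) + 1) * MvPolynomial.coeff (k + Finsupp.single i 1) P := by
  induction P using MvPolynomial.induction_on' with
  | monomial s a =>
    rw [MvPolynomial.pderiv_monomial]
    by_cases h : s = k + Finsupp.single i 1
    · have hsk : s - Finsupp.single i 1 = k := by
        subst h; exact add_tsub_cancel_right _ _
      have hsi : s i = k i + 1 := by subst h; simp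
      rw [hsk, MvPolynomial.coeff_monomial, MvPolynomial.coeff_monomial, if_pos rfl,
        if_pos h, hsi]
      push_cast; ring
    · rw [MvPolynomial.coeff_monomial, MvPolynomial.coeff_monomial, if_neg h, mul_zero]
      by_cases h2 : s - Finsupp.single i 1 = k
      · rw [if_pos h2]
        by_cases h3 : s i = 0
        · simp [h3]
        · exfalso; apply h
          ext b
          have := DFunLike.congr_fun h2 b
          rw [Finsupp.tsub_apply] at this
          simp only [Finsupp.single_apply, Finsupp.add_apply] at this ⊢
          split at this <;> rename_i hb
          · subst hb; simp at this ⊢; omega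
          · simp [hb] at this ⊢; omega
      · rw [if_neg h2]
  | add p q hp hq =>
    simp [map_add, MvPolynomial.coeff_add, hp, hq]; ring

lemma coeff_X_pderiv (i : σ) (P : MvPolynomial σ ℂ) (m : σ →₀ ℕ) :
    MvPolynomial.coeff m (MvPolynomial.X i * MvPolynomial.pderiv i P)
      = (m i : ℂ) * MvPolynomial.coeff m P := by
  rw [MvPolynomial.coeff_X_mul']
  split <;> rename_i h
  · rw [coeff_pderiv]
    have hmi : m i ≠ 0 := by simpa [Finsupp.mem_support_iff] using h
    have hmi1 : (1:ℕ) ≤ m i := Nat.one_le_iff_ne_zero.mpr hmi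
    have hsub : (m - Finsupp.single i 1 : σ →₀ ℕ) i = m i - 1 := by
      rw [Finsupp.tsub_apply, Finsupp.single_eq_same]
    have h1 : (((m - Finsupp.single i 1 : σ →₀ ℕ) i : ℕ) : ℂ) + 1 = (m i : ℂ) := by
      rw [hsub, Nat.cast_sub hmi1]
      push_cast; ring
    have h2 : (m - Finsupp.single i 1) + Finsupp.single i 1 = m := by
      ext b; simp [Finsupp.single_apply]; split <;> rename_i hb
      · subst hb; have := Nat.one_le_iff_ne_zero.mpr hmi; omega
      · omega
    rw [h1, h2]
  · have hmi : m i = 0 := by simpa [Finsupp.mem_support_iff, not_not] using h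
    rw [hmi]; simp

lemma support_pderiv {i : σ} {P : MvPolynomial σ ℂ} {k : σ →₀ ℕ}
    (h : k ∈ (MvPolynomial.pderiv i P).support) :
    k + Finsupp.single i 1 ∈ P.support := by
  rw [MvPolynomial.mem_support_iff] at h ⊢
  rw [coeff_pderiv] at h
  intro h0
  rw [h0, mul_zero] at h
  exact h rfl


lemma pderiv_inl_Hss (γ : Fin n → ℂ) (k : Fin n) :
    pderiv (Sum.inl k) (∑ j : Fin n, C (γ j) * X (Sum.inl j) * X (Sum.inr j))
      = C (γ k) * X (Sum.inr k) := by
  rw [map_sum, Finset.sum_eq_single k]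
  · have h1 : (Sum.inr k : Fin n ⊕ Fin n) ≠ Sum.inl k := by simp
    simp [mul_assoc, pderiv_C_mul, pderiv_mul, pderiv_X_of_ne h1]
  · intro j _ hjk
    have h1 : (Sum.inl j : Fin n ⊕ Fin n) ≠ Sum.inl k := by simp [hjk]
    have h2 : (Sum.inr j : Fin n ⊕ Fin n) ≠ Sum.inl k := by simp
    simp [mul_assoc, pderiv_C_mul, pderiv_mul, pderiv_X_of_ne h1, pderiv_X_of_ne h2]
  · simp

lemma pderiv_inr_Hss (γ : Fin n → ℂ) (k : Fin n) :
    pderiv (Sum.inr k) (∑ j : Fin n, C (γ j) * X (Sum.inl j) * X (Sum.inr j))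
      = C (γ k) * X (Sum.inl k) := by
  rw [map_sum, Finset.sum_eq_single k]
  · have h1 : (Sum.inl k : Fin n ⊕ Fin n) ≠ Sum.inr k := by simp
    simp [mul_assoc, pderiv_C_mul, pderiv_mul, pderiv_X_of_ne h1, mul_comm]
  · intro j _ hjk
    have h1 : (Sum.inl j : Fin n ⊕ Fin n) ≠ Sum.inr k := by simp
    have h2 : (Sum.inr j : Fin n ⊕ Fin n) ≠ Sum.inr k := by simp [hjk]
    simp [mul_assoc, pderiv_C_mul, pderiv_mul, pderiv_X_of_ne h1, pderiv_X_of_ne h2]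
  · simp

lemma coeff_bracket_Hss (γ : Fin n → ℂ) (P : MvPolynomial (Fin n ⊕ Fin n) ℂ)
    (m : (Fin n ⊕ Fin n) →₀ ℕ) :
    coeff m (poissonBracket (∑ j : Fin n, C (γ j) * X (Sum.inl j) * X (Sum.inr j)) P)
      = wt γ m * coeff m P := by
  unfold poissonBracket
  rw [MvPolynomial.coeff_sum, wt, Finset.sum_mul]
  refine Finset.sum_congr rfl fun j _ => ?_
  rw [coeff_sub, pderiv_inl_Hss, pderiv_inr_Hss, mul_assoc, mul_assoc,
    coeff_C_mul, coeff_C_mul, coeff_X_pderiv, coeff_X_pderiv]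
  ring

lemma bracket_self (P : MvPolynomial (Fin n ⊕ Fin n) ℂ) : poissonBracket P P = 0 := by
  refine Finset.sum_eq_zero fun j _ => ?_
  rw [mul_comm]; exact sub_self _

lemma bracket_add_left (P Q R : MvPolynomial (Fin n ⊕ Fin n) ℂ) :
    poissonBracket (P + Q) R = poissonBracket P R + poissonBracket Q R := by
  unfold poissonBracket
  rw [← Finset.sum_add_distrib]
  refine Finset.sum_congr rfl fun j _ => ?_
  rw [map_add, map_add]; ring

lemma bracket_add_right (P Q R : MvPolynomial (Fin n ⊕ Fin n) ℂ) :
    poissonBracket P (Q + R) = poissonBracket P Q + poissonBracket P R := by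
  unfold poissonBracket
  rw [← Finset.sum_add_distrib]
  refine Finset.sum_congr rfl fun j _ => ?_
  rw [map_add, map_add]; ring

lemma bracket_smul_right (c : ℂ) (P Q : MvPolynomial (Fin n ⊕ Fin n) ℂ) :
    poissonBracket P (c • Q) = c • poissonBracket P Q := by
  unfold poissonBracket
  rw [Finset.smul_sum]
  refine Finset.sum_congr rfl fun j _ => ?_
  rw [Derivation.map_smul, Derivation.map_smul, smul_sub, mul_smul_comm, mul_smul_comm]

lemma support_bracket {P Q : MvPolynomial (Fin n ⊕ Fin n) ℂ} {m : (Fin n ⊕ Fin n) →₀ ℕ}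
    (hm : m ∈ (poissonBracket P Q).support) :
    ∃ a ∈ P.support, ∃ b ∈ Q.support, ∃ j : Fin n,
      m + Finsupp.single (Sum.inl j) 1 + Finsupp.single (Sum.inr j) 1 = a + b := by
  rw [MvPolynomial.mem_support_iff] at hm
  unfold poissonBracket at hm
  rw [MvPolynomial.coeff_sum] at hm
  obtain ⟨j, _, hj⟩ := Finset.exists_ne_zero_of_sum_ne_zero hm
  rw [coeff_sub] at hj
  have hcase : coeff m (pderiv (Sum.inl j) P * pderiv (Sum.inr j) Q) ≠ 0 ∨
      coeff m (pderiv (Sum.inr j) P * pderiv (Sum.inl j) Q) ≠ 0 := by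
    by_contra hc
    push_neg at hc
    rw [hc.1, hc.2, sub_zero] at hj
    exact hj rfl
  rcases hcase with hc | hc
  · have hmem := MvPolynomial.support_mul _ _ (MvPolynomial.mem_support_iff.mpr hc)
    rw [Finset.mem_add] at hmem
    obtain ⟨k₁, hk₁, k₂, hk₂, hsum⟩ := hmem
    refine ⟨k₁ + Finsupp.single (Sum.inl j) 1, support_pderiv hk₁,
      k₂ + Finsupp.single (Sum.inr j) 1, support_pderiv hk₂, j, ?_⟩
    rw [← hsum]; abel
  · have hmem := MvPolynomial.support_mul _ _ (MvPolynomial.mem_support_iff.mpr hc)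
    rw [Finset.mem_add] at hmem
    obtain ⟨k₁, hk₁, k₂, hk₂, hsum⟩ := hmem
    refine ⟨k₁ + Finsupp.single (Sum.inr j) 1, support_pderiv hk₁,
      k₂ + Finsupp.single (Sum.inl j) 1, support_pderiv hk₂, j, ?_⟩
    rw [← hsum]; abel

lemma bracket_support_wt_deg (γ : Fin n → ℂ) {P Q : MvPolynomial (Fin n ⊕ Fin n) ℂ}
    {m : (Fin n ⊕ Fin n) →₀ ℕ} (hm : m ∈ (poissonBracket P Q).support) :
    ∃ a ∈ P.support, ∃ b ∈ Q.support,
      wt γ m = wt γ a + wt γ b ∧ m.degree + 2 = a.degree + b.degree := by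
  obtain ⟨a, ha, b, hb, j, hab⟩ := support_bracket hm
  refine ⟨a, ha, b, hb, ?_, ?_⟩
  · have h := congrArg (wt γ) hab
    rw [wt_add, wt_add, wt_add, wt_single_inl, wt_single_inr] at h
    linear_combination h
  · have h := congrArg Finsupp.degree hab
    rw [degree_add, degree_add, degree_add, degree_single, degree_single] at h
    omega


end PBAux

open PBAux

/-- If `H` is in Birkhoff normal form (`{H_ss, H} = 0`, where
`H_ss + H_nil` is the semisimple + nilpotent decomposition of its quadratic part),
then every first integral `F` of `H` also satisfies `{H_ss, F} = 0`. -/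
theorem first_integral_commutes_with_semisimple_part
    (n : ℕ) (γ : Fin n → ℂ)
    (Hss : MvPolynomial (Fin n ⊕ Fin n) ℂ)
    (hHss : Hss = ∑ j : Fin n, C (γ j) * X (Sum.inl j) * X (Sum.inr j))
    (Hnil : MvPolynomial (Fin n ⊕ Fin n) ℂ)
    (hnilHom : Hnil.IsHomogeneous 2)
    (hcomm : poissonBracket Hss Hnil = 0)
    (hnilp : ∀ P : MvPolynomial (Fin n ⊕ Fin n) ℂ,
      ∃ r : ℕ, 1 ≤ r ∧ (fun Q => poissonBracket Hnil Q)^[r] P = 0)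
    (H : MvPolynomial (Fin n ⊕ Fin n) ℂ)
    (h0 : homogeneousComponent 0 H = 0)
    (h1 : homogeneousComponent 1 H = 0)
    (h2 : homogeneousComponent 2 H = Hss + Hnil)
    (hBirkhoff : poissonBracket Hss H = 0)
    (F : MvPolynomial (Fin n ⊕ Fin n) ℂ)
    (hF : poissonBracket H F = 0) :
    poissonBracket Hss F = 0 := by
  classical
  -- weight-zero supports for the various pieces
  have hker : ∀ P : MvPolynomial (Fin n ⊕ Fin n) ℂ, poissonBracket Hss P = 0 →
      ∀ m ∈ P.support, wt γ m = 0 := by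
    intro P hP m hm
    have h := coeff_bracket_Hss γ P m
    rw [← hHss, hP, coeff_zero] at h
    rcases mul_eq_zero.mp h.symm with h | h
    · exact h
    · exact absurd h (MvPolynomial.mem_support_iff.mp hm)
  have hHW := hker H hBirkhoff
  have hnilW := hker Hnil hcomm
  have hssW := hker Hss (by rw [hHss] at hcomm ⊢; exact bracket_self _)
  -- degrees
  have hnildeg : ∀ m ∈ Hnil.support, m.degree = 2 := by
    intro m hm
    rw [Finsupp.degree_eq_weight_one]
    exact hnilHom (MvPolynomial.mem_support_iff.mp hm)
  have hssHom : Hss.IsHomogeneous 2 := by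
    rw [hHss]
    refine IsHomogeneous.sum _ _ _ fun j _ => ?_
    have : ((0:ℕ) + 1 + 1) = 2 := by norm_num
    rw [← this]
    exact ((isHomogeneous_C _ _).mul (isHomogeneous_X _ _)).mul (isHomogeneous_X _ _)
  have hssdeg : ∀ m ∈ Hss.support, m.degree = 2 := by
    intro m hm
    rw [Finsupp.degree_eq_weight_one]
    exact hssHom (MvPolynomial.mem_support_iff.mp hm)
  have hHlow : ∀ m : (Fin n ⊕ Fin n) →₀ ℕ, m.degree ≤ 1 → coeff m H = 0 := by
    intro m hm
    rcases Nat.le_one_iff_eq_zero_or_eq_one.mp hm with h | h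
    · have e0 := congrArg (coeff m) h0
      rw [coeff_homogeneousComponent, if_pos h, coeff_zero] at e0
      exact e0
    · have e1 := congrArg (coeff m) h1
      rw [coeff_homogeneousComponent, if_pos h, coeff_zero] at e1
      exact e1
  set R := H - Hss - Hnil with hRdef
  have hHsum : H = Hss + Hnil + R := by rw [hRdef]; ring
  have hRW : ∀ m ∈ R.support, wt γ m = 0 := by
    intro m hm
    by_contra hw
    have c1 : coeff m H = 0 := by
      by_contra hc; exact hw (hHW m (MvPolynomial.mem_support_iff.mpr hc))
    have c2 : coeff m Hss = 0 := by
      by_contra hc; exact hw (hssW m (MvPolynomial.mem_support_iff.mpr hc))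
    have c3 : coeff m Hnil = 0 := by
      by_contra hc; exact hw (hnilW m (MvPolynomial.mem_support_iff.mpr hc))
    have : coeff m R = 0 := by rw [hRdef, coeff_sub, coeff_sub, c1, c2, c3]; ring
    exact MvPolynomial.mem_support_iff.mp hm this
  have hRdeg : ∀ m ∈ R.support, 3 ≤ m.degree := by
    intro m hm
    by_contra hd
    push_neg at hd
    have hRm : coeff m R ≠ 0 := MvPolynomial.mem_support_iff.mp hm
    have hssm : m.degree ≠ 2 → coeff m Hss = 0 := by
      intro h; by_contra hc
      exact h (hssdeg m (MvPolynomial.mem_support_iff.mpr hc))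
    have hnilm : m.degree ≠ 2 → coeff m Hnil = 0 := by
      intro h; by_contra hc
      exact h (hnildeg m (MvPolynomial.mem_support_iff.mpr hc))
    by_cases h2' : m.degree = 2
    · have e2 := congrArg (coeff m) h2
      rw [coeff_homogeneousComponent, if_pos h2', coeff_add] at e2
      have : coeff m R = 0 := by rw [hRdef, coeff_sub, coeff_sub, e2]; ring
      exact hRm this
    · have hle : m.degree ≤ 1 := by omega
      have : coeff m R = 0 := by
        rw [hRdef, coeff_sub, coeff_sub, hHlow m hle, hssm h2', hnilm h2']; ring
      exact hRm this
  -- reduce the goal to a support statement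
  suffices hsupp : ∀ m ∈ F.support, wt γ m = 0 by
    apply MvPolynomial.ext
    intro m
    rw [coeff_zero, hHss, coeff_bracket_Hss]
    by_cases hc : coeff m F = 0
    · rw [hc, mul_zero]
    · rw [hsupp m (MvPolynomial.mem_support_iff.mpr hc), zero_mul]
  by_contra hcon
  push_neg at hcon
  obtain ⟨m₀, hm₀, hl0⟩ := hcon
  set l := wt γ m₀ with hldef
  set T := F.support.filter (fun m => wt γ m = l) with hT
  have hTne : T.Nonempty := ⟨m₀, Finset.mem_filter.mpr ⟨hm₀, rfl⟩⟩
  set d := (T.image Finsupp.degree).min' (hTne.image _) with hd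
  have hdmem := Finset.min'_mem (T.image Finsupp.degree) (hTne.image _)
  rw [Finset.mem_image] at hdmem
  obtain ⟨m₁, hm₁T, hm₁d⟩ := hdmem
  have hdmin : ∀ m ∈ T, d ≤ m.degree := fun m hm =>
    Finset.min'_le _ _ (Finset.mem_image_of_mem _ hm)
  set G : MvPolynomial (Fin n ⊕ Fin n) ℂ :=
    ∑ m ∈ T.filter (fun m => m.degree = d), monomial m (coeff m F) with hG
  have hGcoeff : ∀ k, coeff k G
      = if wt γ k = l ∧ k.degree = d then coeff k F else 0 := by
    intro k
    rw [hG, MvPolynomial.coeff_sum]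
    simp_rw [coeff_monomial]
    rw [Finset.sum_ite_eq']
    by_cases hk : wt γ k = l ∧ k.degree = d
    · rw [if_pos hk]
      by_cases hks : k ∈ F.support
      · rw [if_pos (Finset.mem_filter.mpr ⟨Finset.mem_filter.mpr ⟨hks, hk.1⟩, hk.2⟩)]
      · rw [MvPolynomial.notMem_support_iff.mp hks]
        split <;> rfl
    · rw [if_neg hk, if_neg]
      intro hks
      rw [Finset.mem_filter, Finset.mem_filter] at hks
      exact hk ⟨hks.1.2, hks.2⟩
  have hm₁mem := Finset.mem_filter.mp hm₁T
  have hGne : G ≠ 0 := by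
    intro hzero
    have := hGcoeff m₁
    rw [hzero, coeff_zero, if_pos ⟨hm₁mem.2, hm₁d⟩] at this
    exact MvPolynomial.mem_support_iff.mp hm₁mem.1 this.symm
  have hGsupp : ∀ k ∈ G.support, wt γ k = l ∧ k.degree = d := by
    intro k hk
    by_contra hc
    have := hGcoeff k
    rw [if_neg hc] at this
    exact MvPolynomial.mem_support_iff.mp hk this
  have hsplit : ∀ k, (0:ℂ)
      = wt γ k * coeff k F + coeff k (poissonBracket Hnil F)
        + coeff k (poissonBracket R F) := by
    intro k
    have e : poissonBracket H F = poissonBracket Hss F + poissonBracket Hnil F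
        + poissonBracket R F := by
      conv_lhs => rw [hHsum]
      rw [bracket_add_left, bracket_add_left]
    have := congrArg (coeff k) e
    rw [hF, coeff_zero, coeff_add, coeff_add, hHss, coeff_bracket_Hss] at this
    exact this
  have hclass : ∀ k : (Fin n ⊕ Fin n) →₀ ℕ, wt γ k = l → k.degree = d →
      coeff k (poissonBracket Hnil G) = -l * coeff k G := by
    intro k hkw hkd
    have h0' := hsplit k
    have hRzero : coeff k (poissonBracket R F) = 0 := by
      by_contra hc
      obtain ⟨a, ha, b, hb, hwab, hdab⟩ :=
        bracket_support_wt_deg γ (MvPolynomial.mem_support_iff.mpr hc)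
      have hwa := hRW a ha
      have hda := hRdeg a ha
      have hwb : wt γ b = l := by rw [hwa, zero_add] at hwab; rw [← hwab, hkw]
      have hbT : b ∈ T := Finset.mem_filter.mpr ⟨hb, hwb⟩
      have := hdmin b hbT
      omega
    have hdiff : coeff k (poissonBracket Hnil (F - G)) = 0 := by
      by_contra hc
      obtain ⟨a, ha, b, hb, hwab, hdab⟩ :=
        bracket_support_wt_deg γ (MvPolynomial.mem_support_iff.mpr hc)
      have hwa := hnilW a ha
      have hda := hnildeg a ha
      have hwb : wt γ b = l := by rw [hwa, zero_add] at hwab; rw [← hwab, hkw]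
      have hdb : b.degree = d := by omega
      have : coeff b (F - G) = 0 := by
        rw [coeff_sub, hGcoeff, if_pos ⟨hwb, hdb⟩, sub_self]
      exact MvPolynomial.mem_support_iff.mp hb this
    have hFG : coeff k (poissonBracket Hnil F)
        = coeff k (poissonBracket Hnil G) := by
      have hFe : F = G + (F - G) := by ring
      calc coeff k (poissonBracket Hnil F)
          = coeff k (poissonBracket Hnil G)
            + coeff k (poissonBracket Hnil (F - G)) := by
            rw [← coeff_add, ← bracket_add_right, ← hFe]
        _ = coeff k (poissonBracket Hnil G) := by rw [hdiff, add_zero]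
    have hkFG : coeff k F = coeff k G := by
      rw [hGcoeff, if_pos ⟨hkw, hkd⟩]
    rw [hkw, hRzero, hFG, hkFG] at h0'
    linear_combination -h0'
  have hNG : poissonBracket Hnil G = (-l) • G := by
    apply MvPolynomial.ext
    intro k
    rw [MvPolynomial.coeff_smul, smul_eq_mul]
    by_cases hk : wt γ k = l ∧ k.degree = d
    · exact hclass k hk.1 hk.2
    · have hGk : coeff k G = 0 := by rw [hGcoeff, if_neg hk]
      have hNGk : coeff k (poissonBracket Hnil G) = 0 := by
        by_contra hc
        obtain ⟨a, ha, b, hb, hwab, hdab⟩ :=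
          bracket_support_wt_deg γ (MvPolynomial.mem_support_iff.mpr hc)
        have hwa := hnilW a ha
        have hda := hnildeg a ha
        obtain ⟨hwb, hdb⟩ := hGsupp b hb
        exact hk ⟨by rw [hwab, hwa, zero_add, hwb], by omega⟩
      rw [hNGk, hGk, mul_zero]
  have hiter : ∀ r : ℕ, (fun Q => poissonBracket Hnil Q)^[r] G = ((-l)^r) • G := by
    intro r
    induction r with
    | zero => simp
    | succ r ih =>
      rw [Function.iterate_succ_apply', ih]
      show poissonBracket Hnil ((-l)^r • G) = _
      rw [bracket_smul_right, hNG, smul_smul, ← pow_succ]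
  obtain ⟨r, hr1, hr0⟩ := hnilp G
  rw [hiter r] at hr0
  rcases smul_eq_zero.mp hr0 with h | h
  · have : (-l) = 0 := pow_eq_zero_iff (by omega : r ≠ 0) |>.mp h
    exact hl0 (neg_eq_zero.mp this)
  · exact hGne h
end

section
/- Let γ = (γ_1, …, γ_n) ∈ ℂⁿ be nonresonant, i.e. for every c ∈ ℤⁿ, Σ_{j=1}^n c_j γ_j = 0 implies c = 0, and let H_ss = Σ_{j=1}^n γ_j x_j y_j in ℂ[x_1, …, x_n, y_1, …, y_n]. If H is a polynomial with {H_ss, H} = 0, then H is a polynomial in the n products x_j y_j: there exists a polynomial Q ∈ ℂ[z_1, …, z_n] such that H = Q(x_1 y_1, …, x_n y_n). -/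
/-!
The bracket with `H_ss = Σ γ_j x_j y_j` acts diagonally on monomials: it multiplies
`x^a y^b` by `Σ_j (b_j - a_j) γ_j`. So `{H_ss, H} = 0` kills every monomial of `H` with nonzero
weight, and nonresonance says the weight vanishes only when `a = b`, i.e. only for monomials
`Π_j (x_j y_j)^{a_j}`.
-/

open MvPolynomial

section Polynomial

variable {R σ : Type*} [CommSemiring R]

theorem coeff_X_mul_pderiv (i : σ) (m : σ →₀ ℕ) (p : MvPolynomial σ R) :
    coeff m (X i * pderiv i p) = m i * coeff m p := by
  classical
  induction p using MvPolynomial.induction_on' with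
  | monomial d a =>
    rw [X_mul_pderiv_monomial, coeff_smul, coeff_monomial]
    split_ifs with h
    · rw [h, nsmul_eq_mul]
    · simp
  | add p q hp hq => rw [map_add, mul_add, coeff_add, hp, hq, coeff_add, mul_add]

theorem pderiv_inl_sum_C_mul_X_inl_mul_X_inr [Fintype σ] [DecidableEq σ] (γ : σ → R)
    (j : σ) :
    pderiv (Sum.inl j)
        (∑ i, C (γ i) * X (Sum.inl i) * X (Sum.inr i) : MvPolynomial (σ ⊕ σ) R)
      = C (γ j) * X (Sum.inr j) := by
  rw [map_sum, Finset.sum_eq_single j]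
  · simp [pderiv_X, mul_comm]
  · intro i _ hij
    simp [pderiv_X, hij]
  · simp

theorem pderiv_inr_sum_C_mul_X_inl_mul_X_inr [Fintype σ] [DecidableEq σ] (γ : σ → R)
    (j : σ) :
    pderiv (Sum.inr j)
        (∑ i, C (γ i) * X (Sum.inl i) * X (Sum.inr i) : MvPolynomial (σ ⊕ σ) R)
      = C (γ j) * X (Sum.inl j) := by
  rw [map_sum, Finset.sum_eq_single j]
  · simp [pderiv_X, mul_comm]
  · intro i _ hij
    simp [pderiv_X, hij]
  · simp

theorem monomial_mem_range_aeval_X_inl_mul_X_inr [Fintype σ] {m : σ ⊕ σ →₀ ℕ}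
    (hm : ∀ j, m (Sum.inl j) = m (Sum.inr j)) (a : R) :
    monomial m a ∈ (aeval (R := R) fun j : σ => (X (Sum.inl j) * X (Sum.inr j) :
      MvPolynomial (σ ⊕ σ) R)).range := by
  refine (AlgHom.mem_range _).2
    ⟨monomial (Finsupp.equivFunOnFinite.symm fun j => m (Sum.inl j)) a, ?_⟩
  rw [aeval_monomial, Finsupp.prod_fintype _ _ fun _ => pow_zero _, algebraMap_eq,
    monomial_eq, Finsupp.prod_fintype _ _ fun _ => pow_zero _, Fintype.prod_sum_type,
    ← Finset.prod_mul_distrib]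
  simp only [Finsupp.coe_equivFunOnFinite_symm, mul_pow, hm]

theorem mem_range_aeval_X_inl_mul_X_inr [Fintype σ] {p : MvPolynomial (σ ⊕ σ) R}
    (hp : ∀ m ∈ p.support, ∀ j, m (Sum.inl j) = m (Sum.inr j)) :
    p ∈ (aeval (R := R) fun j : σ => (X (Sum.inl j) * X (Sum.inr j) :
      MvPolynomial (σ ⊕ σ) R)).range := by
  rw [← p.support_sum_monomial_coeff]
  exact Subalgebra.sum_mem _ fun m hm => monomial_mem_range_aeval_X_inl_mul_X_inr (hp m hm) _

end Polynomial

def exponentImbalance {n : ℕ} (m : Fin n ⊕ Fin n →₀ ℕ) (j : Fin n) : ℤ :=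
  m (Sum.inr j) - m (Sum.inl j)

theorem poissonBracket_sum_C_mul_X_inl_mul_X_inr {n : ℕ} (γ : Fin n → ℂ)
    (H : MvPolynomial (Fin n ⊕ Fin n) ℂ) :
    poissonBracket (∑ i, C (γ i) * X (Sum.inl i) * X (Sum.inr i)) H
      = ∑ j, C (γ j) * (X (Sum.inr j) * pderiv (Sum.inr j) H
          - X (Sum.inl j) * pderiv (Sum.inl j) H) := by
  unfold poissonBracket
  refine Finset.sum_congr rfl fun j _ => ?_
  rw [pderiv_inl_sum_C_mul_X_inl_mul_X_inr, pderiv_inr_sum_C_mul_X_inl_mul_X_inr]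
  ring

theorem coeff_poissonBracket_sum_C_mul_X_inl_mul_X_inr {n : ℕ} (γ : Fin n → ℂ)
    (H : MvPolynomial (Fin n ⊕ Fin n) ℂ) (m : Fin n ⊕ Fin n →₀ ℕ) :
    coeff m (poissonBracket (∑ i, C (γ i) * X (Sum.inl i) * X (Sum.inr i)) H)
      = (∑ j, (exponentImbalance m j : ℂ) * γ j) * coeff m H := by
  simp only [poissonBracket_sum_C_mul_X_inl_mul_X_inr, coeff_sum, coeff_C_mul, coeff_sub,
    coeff_X_mul_pderiv, Finset.sum_mul, exponentImbalance]
  refine Finset.sum_congr rfl fun j _ => ?_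
  push_cast
  ring

/-- If `γ` is nonresonant, then any polynomial `H` with
`{H_ss, H} = 0` is a polynomial in the products `x_j y_j`. -/
theorem nonresonant_normal_form_is_function_of_actions
    (n : ℕ) (γ : Fin n → ℂ)
    (hres : ∀ c : Fin n → ℤ, ∑ j : Fin n, (c j : ℂ) * γ j = 0 → c = 0)
    (Hss : MvPolynomial (Fin n ⊕ Fin n) ℂ)
    (hHss : Hss = ∑ j : Fin n, C (γ j) * X (Sum.inl j) * X (Sum.inr j))
    (H : MvPolynomial (Fin n ⊕ Fin n) ℂ)
    (hH : poissonBracket Hss H = 0) :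
    ∃ Q : MvPolynomial (Fin n) ℂ,
      H = aeval (fun j : Fin n => X (Sum.inl j) * X (Sum.inr j)) Q := by
  subst hHss
  have balanced : ∀ m ∈ H.support, ∀ j, m (Sum.inl j) = m (Sum.inr j) := by
    intro m hm j
    have hcoeff := coeff_poissonBracket_sum_C_mul_X_inl_mul_X_inr γ H m
    rw [hH, coeff_zero, eq_comm, mul_eq_zero] at hcoeff
    have himb := congrFun (hres _ (hcoeff.resolve_right (mem_support_iff.mp hm))) j
    simp only [exponentImbalance, Pi.zero_apply, sub_eq_zero] at himb
    exact_mod_cast himb.symm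
  obtain ⟨Q, hQ⟩ := mem_range_aeval_X_inl_mul_X_inr balanced
  exact ⟨Q, hQ.symm⟩
end

section
/- Let γ = (γ_1, …, γ_n) ∈ ℂⁿ and let H_ss = Σ_{j=1}^n γ_j x_j y_j in ℂ[x_1, …, x_n, y_1, …, y_n]. Let p ≥ 1 and let ρ^{(1)}, …, ρ^{(p)} ∈ ℤⁿ be integer vectors such that for every c ∈ ℤⁿ one has Σ_{j=1}^n c_j γ_j = 0 if and only if Σ_{j=1}^n c_j ρ^{(k)}_j = 0 for all k = 1, …, p. Set F^{(k)} = Σ_{j=1}^n ρ^{(k)}_j x_j y_j. Then for any polynomial H, one has {H_ss, H} = 0 if and only if {F^{(k)}, H} = 0 for all k = 1, …, p. -/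
open MvPolynomial

-- quadratic polynomial built from coefficient vector
noncomputable def quadPB {n : ℕ} (a : Fin n → ℂ) : MvPolynomial (Fin n ⊕ Fin n) ℂ :=
  ∑ j : Fin n, C (a j) * X (Sum.inl j) * X (Sum.inr j)

lemma pderiv_quad_inl {n : ℕ} (a : Fin n → ℂ) (j : Fin n) :
    pderiv (Sum.inl j) (quadPB a) = C (a j) * X (Sum.inr j) := by
  unfold quadPB
  rw [map_sum, Finset.sum_eq_single j]
  · simp [pderiv_mul, pderiv_X_self, pderiv_X_of_ne]; ring
  · intro b _ hb
    simp [pderiv_mul, pderiv_X_of_ne, (by simpa using hb : Sum.inl b ≠ (Sum.inl j : Fin n ⊕ Fin n))]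
  · simp

lemma pderiv_quad_inr {n : ℕ} (a : Fin n → ℂ) (j : Fin n) :
    pderiv (Sum.inr j) (quadPB a) = C (a j) * X (Sum.inl j) := by
  unfold quadPB
  rw [map_sum, Finset.sum_eq_single j]
  · simp [pderiv_mul, pderiv_X_self, pderiv_X_of_ne]
  · intro b _ hb
    simp [pderiv_mul, pderiv_X_of_ne, (by simpa using hb : Sum.inr b ≠ (Sum.inr j : Fin n ⊕ Fin n))]
  · simp

lemma X_mul_pderiv_monomial {n : ℕ} (i : Fin n ⊕ Fin n) (m : (Fin n ⊕ Fin n) →₀ ℕ) (c : ℂ) :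
    X i * pderiv i (monomial m c) = (m i : ℂ) • monomial m c := by
  rw [pderiv_monomial]
  by_cases h : m i = 0
  · simp [h]
  · have hle : Finsupp.single i 1 ≤ m := by
      rw [Finsupp.single_le_iff]
      exact Nat.one_le_iff_ne_zero.mpr h
    have hadd : Finsupp.single i 1 + (m - Finsupp.single i 1) = m :=
      add_tsub_cancel_of_le hle
    rw [X, monomial_mul]
    rw [show ((fun₀ | i => 1) : (Fin n ⊕ Fin n) →₀ ℕ) = Finsupp.single i 1 from rfl, hadd,
      smul_monomial]
    congr 1
    rw [smul_eq_mul]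
    ring

lemma pb_quad_monomial {n : ℕ} (a : Fin n → ℂ) (m : (Fin n ⊕ Fin n) →₀ ℕ) (c : ℂ) :
    poissonBracket (quadPB a) (monomial m c)
      = (∑ j : Fin n, a j * ((m (Sum.inr j) : ℂ) - (m (Sum.inl j) : ℂ))) • monomial m c := by
  unfold poissonBracket
  rw [Finset.sum_smul]
  apply Finset.sum_congr rfl
  intro j _
  rw [pderiv_quad_inl, pderiv_quad_inr]
  have h1 := X_mul_pderiv_monomial (Sum.inr j) m c
  have h2 := X_mul_pderiv_monomial (Sum.inl j) m c
  calc C (a j) * X (Sum.inr j) * pderiv (Sum.inr j) (monomial m c)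
        - C (a j) * X (Sum.inl j) * pderiv (Sum.inl j) (monomial m c)
      = C (a j) * (X (Sum.inr j) * pderiv (Sum.inr j) (monomial m c))
        - C (a j) * (X (Sum.inl j) * pderiv (Sum.inl j) (monomial m c)) := by ring
    _ = C (a j) * ((m (Sum.inr j) : ℂ) • monomial m c)
        - C (a j) * ((m (Sum.inl j) : ℂ) • monomial m c) := by rw [h1, h2]
    _ = (a j * ((m (Sum.inr j) : ℂ) - (m (Sum.inl j) : ℂ))) • monomial m c := by
        rw [smul_eq_C_mul, smul_eq_C_mul, smul_eq_C_mul, C_mul, C_sub]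
        ring

lemma pb_quad_add {n : ℕ} (G f g : MvPolynomial (Fin n ⊕ Fin n) ℂ) :
    poissonBracket G (f + g) = poissonBracket G f + poissonBracket G g := by
  unfold poissonBracket
  rw [← Finset.sum_add_distrib]
  apply Finset.sum_congr rfl
  intro j _
  rw [map_add, map_add]
  ring

lemma coeff_pb_quad {n : ℕ} (a : Fin n → ℂ) (H : MvPolynomial (Fin n ⊕ Fin n) ℂ)
    (m : (Fin n ⊕ Fin n) →₀ ℕ) :
    coeff m (poissonBracket (quadPB a) H)
      = (∑ j : Fin n, a j * ((m (Sum.inr j) : ℂ) - (m (Sum.inl j) : ℂ))) * coeff m H := by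
  have hsum : ∀ (s : Finset ((Fin n ⊕ Fin n) →₀ ℕ)) (f : ((Fin n ⊕ Fin n) →₀ ℕ) → MvPolynomial (Fin n ⊕ Fin n) ℂ),
      poissonBracket (quadPB a) (∑ v ∈ s, f v) = ∑ v ∈ s, poissonBracket (quadPB a) (f v) := by
    intro s f
    induction s using Finset.induction with
    | empty => simp [poissonBracket]
    | insert _ _ h ih => rw [Finset.sum_insert h, Finset.sum_insert h, pb_quad_add, ih]
  conv_lhs => rw [as_sum H, hsum]
  rw [coeff_sum]
  simp_rw [pb_quad_monomial]
  by_cases hm : m ∈ H.support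
  · rw [Finset.sum_eq_single m]
    · rw [MvPolynomial.coeff_smul, coeff_monomial, if_pos rfl, smul_eq_mul]
    · intro b _ hb
      simp [coeff_monomial, hb]
    · intro h; exact absurd hm h
  · rw [Finset.sum_eq_zero, (notMem_support_iff.mp hm), mul_zero]
    intro b hb
    have : b ≠ m := fun h => hm (h ▸ hb)
    simp [coeff_monomial, this]

lemma pb_quad_eq_zero_iff {n : ℕ} (a : Fin n → ℂ) (H : MvPolynomial (Fin n ⊕ Fin n) ℂ) :
    poissonBracket (quadPB a) H = 0 ↔
      ∀ m ∈ H.support, ∑ j : Fin n, a j * ((m (Sum.inr j) : ℂ) - (m (Sum.inl j) : ℂ)) = 0 := by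
  rw [MvPolynomial.ext_iff]
  constructor
  · intro h m hm
    have := h m
    rw [coeff_pb_quad, coeff_zero] at this
    exact (mul_eq_zero.mp this).resolve_right (mem_support_iff.mp hm)
  · intro h m
    rw [coeff_pb_quad, coeff_zero]
    by_cases hm : m ∈ H.support
    · rw [h m hm, zero_mul]
    · rw [notMem_support_iff.mp hm, mul_zero]

/-- If `ρ^{(1)}, …, ρ^{(p)} ∈ ℤⁿ` are such that an integer vector `c`
satisfies `Σ_j c_j γ_j = 0` iff `Σ_j c_j ρ^{(k)}_j = 0` for all `k`, and
`F^{(k)} = Σ_j ρ^{(k)}_j x_j y_j`, then `{H_ss, H} = 0` iff `{F^{(k)}, H} = 0`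
for all `k`. -/
theorem poissonBracket_semisimple_eq_zero_iff_commutes_with_Fk
    (n p : ℕ) (hp : 1 ≤ p) (γ : Fin n → ℂ) (ρ : Fin p → Fin n → ℤ)
    (hρ : ∀ c : Fin n → ℤ,
      (∑ j : Fin n, (c j : ℂ) * γ j = 0) ↔ ∀ k : Fin p, ∑ j : Fin n, c j * ρ k j = 0)
    (Hss : MvPolynomial (Fin n ⊕ Fin n) ℂ)
    (hHss : Hss = ∑ j : Fin n, C (γ j) * X (Sum.inl j) * X (Sum.inr j))
    (F : Fin p → MvPolynomial (Fin n ⊕ Fin n) ℂ)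
    (hF : ∀ k, F k = ∑ j : Fin n, C ((ρ k j : ℤ) : ℂ) * X (Sum.inl j) * X (Sum.inr j))
    (H : MvPolynomial (Fin n ⊕ Fin n) ℂ) :
    poissonBracket Hss H = 0 ↔ ∀ k : Fin p, poissonBracket (F k) H = 0 := by
  have hHss' : Hss = quadPB γ := hHss
  have hF' : ∀ k, F k = quadPB (fun j => ((ρ k j : ℤ) : ℂ)) := hF
  rw [hHss', pb_quad_eq_zero_iff]
  have key : ∀ m : (Fin n ⊕ Fin n) →₀ ℕ,
      (∑ j : Fin n, γ j * ((m (Sum.inr j) : ℂ) - (m (Sum.inl j) : ℂ)) = 0)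
      ↔ ∀ k : Fin p, ∑ j : Fin n, ((ρ k j : ℤ) : ℂ) * ((m (Sum.inr j) : ℂ) - (m (Sum.inl j) : ℂ)) = 0 := by
    intro m
    set c : Fin n → ℤ := fun j => (m (Sum.inr j) : ℤ) - (m (Sum.inl j) : ℤ) with hc
    have hcast : ∀ j, ((c j : ℤ) : ℂ) = (m (Sum.inr j) : ℂ) - (m (Sum.inl j) : ℂ) := by
      intro j; simp [hc]
    have := hρ c
    constructor
    · intro h k
      have h0 : ∑ j : Fin n, (c j : ℂ) * γ j = 0 := by
        rw [← h]; apply Finset.sum_congr rfl; intro j _; rw [hcast]; ring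
      have h1 := (this.mp h0) k
      have : ((∑ j : Fin n, c j * ρ k j : ℤ) : ℂ) = 0 := by exact_mod_cast h1
      rw [← this]
      push_cast
      apply Finset.sum_congr rfl; intro j _; rw [hcast]; ring
    · intro h
      have h1 : ∀ k, ∑ j : Fin n, c j * ρ k j = 0 := by
        intro k
        have h2 : ((∑ j : Fin n, c j * ρ k j : ℤ) : ℂ) = 0 := by
          push_cast
          rw [← h k]
          apply Finset.sum_congr rfl; intro j _; rw [hcast]; ring
        exact_mod_cast h2
      have h0 := this.mpr h1
      rw [← h0]
      apply Finset.sum_congr rfl; intro j _; rw [hcast]; ring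
  constructor
  · intro h k
    rw [hF' k, pb_quad_eq_zero_iff]
    intro m hm
    exact (key m).mp (h m hm) k
  · intro h m hm
    refine (key m).mpr (fun k => ?_)
    have := h k
    rw [hF' k, pb_quad_eq_zero_iff] at this
    exact this m hm
end

section
/- Let γ = (γ_1, …, γ_n) ∈ ℂⁿ, let R = {c ∈ ℤⁿ : Σ_{j=1}^n c_j γ_j = 0} be the resonance lattice of γ, and let q be the rank of R as a free abelian group (q = finrank over ℤ of the subgroup R of ℤⁿ). Then there exist integer vectors ρ^{(1)}, …, ρ^{(n−q)} ∈ ℤⁿ and complex numbers α_1, …, α_{n−q} ∈ ℂ such that γ_j = Σ_{k=1}^{n−q} α_k ρ^{(k)}_j for every j = 1, …, n, and such that α_1, …, α_{n−q} satisfy no nontrivial integer resonance relation: for every m ∈ ℤ^{n−q}, Σ_{k=1}^{n−q} m_k α_k = 0 implies m = 0. -/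
/-- Let `R = {c ∈ ℤⁿ : Σ_j c_j γ_j = 0}` be the resonance lattice of
`γ ∈ ℂⁿ` and `q` its rank. Then `γ` can be written as `γ_j = Σ_{k=1}^{n−q} α_k ρ^{(k)}_j`
with `ρ^{(k)} ∈ ℤⁿ` and the `α_k` satisfying no nontrivial integer resonance relation. -/
theorem frequencies_decompose_along_nonresonant_basis
    (n : ℕ) (γ : Fin n → ℂ)
    (R : Submodule ℤ (Fin n → ℤ))
    (hR : ∀ c : Fin n → ℤ, c ∈ R ↔ ∑ j : Fin n, (c j : ℂ) * γ j = 0) :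
    ∃ (ρ : Fin (n - Module.finrank ℤ R) → Fin n → ℤ)
      (α : Fin (n - Module.finrank ℤ R) → ℂ),
      (∀ j : Fin n, γ j = ∑ k, α k * (ρ k j : ℂ)) ∧
      (∀ m : Fin (n - Module.finrank ℤ R) → ℤ,
        ∑ k, (m k : ℂ) * α k = 0 → m = 0) := by
  classical
  -- the ℤ-linear map `c ↦ Σ c_j γ_j`
  let L : (Fin n → ℤ) →ₗ[ℤ] ℂ :=
    { toFun := fun c => ∑ j : Fin n, (c j : ℂ) * γ j
      map_add' := by
        intro a b
        simp [add_mul, Finset.sum_add_distrib]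
      map_smul' := by
        intro z a
        simp [Finset.mul_sum, mul_assoc] }
  have hker : R = LinearMap.ker L := by
    ext c
    simpa [L] using hR c
  -- the quotient module and the induced injection into ℂ
  let M := (Fin n → ℤ) ⧸ R
  let ι : M →ₗ[ℤ] ℂ := Submodule.liftQ R L (le_of_eq hker)
  have hinj : Function.Injective ι := by
    rw [← LinearMap.ker_eq_bot]
    exact Submodule.ker_liftQ_eq_bot' R L hker
  -- M is torsion-free, hence free
  have : NoZeroSMulDivisors ℤ M := by
    refine ⟨fun {z x} h => ?_⟩
    have : z • ι x = 0 := by rw [← map_smul, h, map_zero]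
    rcases smul_eq_zero.mp this with hz | hx
    · exact Or.inl hz
    · exact Or.inr (hinj (by simpa using hx))
  have hfree : Module.Free ℤ M := Module.free_of_finite_type_torsion_free'
  -- its rank is n - q
  have hrk : Module.finrank ℤ M = n - Module.finrank ℤ R := by
    rw [Submodule.finrank_quotient]
    congr 1
    simp [Module.finrank_pi]
  -- choose a basis of M
  let b : Module.Basis (Fin (n - Module.finrank ℤ R)) ℤ M :=
    (Module.finBasis ℤ M).reindex (finCongr hrk)
  refine ⟨fun k j => b.repr (Submodule.Quotient.mk (Pi.single j 1)) k,
    fun k => ι (b k), fun j => ?_, fun m hm => ?_⟩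
  · have h1 : γ j = L (Pi.single j 1) := by
      simp [L, Pi.single_apply, Finset.sum_ite_eq']
    have h2 : L (Pi.single j 1) = ι (Submodule.Quotient.mk (Pi.single j 1)) := rfl
    rw [h1, h2, ← b.sum_repr (Submodule.Quotient.mk (Pi.single j 1)), map_sum]
    refine Finset.sum_congr rfl fun k _ => ?_
    rw [map_zsmul, zsmul_eq_mul, mul_comm]
  · have h0 : ι (∑ k, m k • b k) = 0 := by
      rw [map_sum]
      rw [← hm]
      refine Finset.sum_congr rfl fun k _ => ?_
      rw [map_zsmul, zsmul_eq_mul]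
    have : (∑ k, m k • b k : M) = 0 := hinj (by simpa using h0)
    have := b.linearIndependent
    rw [Fintype.linearIndependent_iff] at this
    exact funext (this m ‹_›)
end
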